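/- Let q be a prime power, k, n, d ≥ 1, and let Q ⊆ F_q^{k×n} be a code with minimum rank distance d, i.e., rank(A − B) ≥ d for all distinct A, B ∈ Q. Then {rowspace(I_k | A) : A ∈ Q} is a family of exactly |Q| distinct k-dimensional subspaces of F_q^{k+n} whose pairwise subspace distances are all at least 2d. In particular, A_q(n+k, 2d, k) ≥ |Q|. -/

import Mathlib

open Matrix

/-- The row space of a matrix: the span of its rows. -/
noncomputable def rowSpan {F : Type*} [Field F] {k c : ℕ} (M : Matrix (Fin k) (Fin c) F) :
    Submodule F (Fin c → F) :=
  Submodule.span F (Set.range M)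

/-- The subspace distance `d_S(U, W) = dim(U + W) - dim(U ∩ W)`. -/
noncomputable def sDist {F : Type*} [Field F] {N : ℕ} (U W : Submodule F (Fin N → F)) : ℕ :=
  Module.finrank F ↥(U ⊔ W) - Module.finrank F ↥(U ⊓ W)

/-- `rowspace (I_k | A)` as a subspace of `F^(k+n)`. -/
noncomputable def liftL {F : Type*} [Field F] {k n : ℕ} (A : Matrix (Fin k) (Fin n) F) :
    Submodule F (Fin (k + n) → F) :=
  rowSpan ((Matrix.fromCols (1 : Matrix (Fin k) (Fin k) F) A).submatrix id finSumFinEquiv.symm)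

/-- `A_q(N, d, k)`: the maximum size of a constant dimension code of `k`-dimensional
subspaces of `F^N` with pairwise subspace distances at least `d`. -/
noncomputable def Aq (F : Type*) [Field F] (N d k : ℕ) : ℕ :=
  sSup {M : ℕ | ∃ C : Set (Submodule F (Fin N → F)), C.Finite ∧ C.ncard = M ∧
    (∀ U ∈ C, Module.finrank F ↥U = k) ∧
    (∀ U ∈ C, ∀ W ∈ C, U ≠ W → d ≤ sDist U W)}


/-!
A vector `f = (x | y) ∈ F^(k+n)` lies in `rowspace (I_k | A)` iff `y = x A`, so the lifted space is
the graph of `x ↦ x A` and has dimension `k`, and distinct `A` give distinct graphs. The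
intersection of the graphs of `A` and `B` is the graph of `A` over the left kernel of `A - B`,
which has dimension `k - rank (A - B)`; with `dim (U + W) = 2k - dim (U ∩ W)` this gives
`d_S = 2 rank (A - B)`.
-/

theorem Matrix.finrank_ker_vecMulLinear {F : Type*} [Field F] {m ι : Type*} [Fintype m] [Fintype ι]
    (M : Matrix m ι F) :
    Module.finrank F (LinearMap.ker M.vecMulLinear) = Fintype.card m - M.rank := by
  have hrank : Module.finrank F (LinearMap.range M.vecMulLinear) = M.rank := by
    rw [rank_eq_finrank_span_row, range_vecMulLinear]
  have := LinearMap.finrank_range_add_finrank_ker M.vecMulLinear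
  rw [hrank, Module.finrank_fintype_fun_eq_card] at this
  omega

/-- For infinite `F` the set in the definition of `Aq` can be unbounded, making `Aq` the junk
value `0` of `sSup`. -/
theorem ncard_le_Aq {F : Type*} [Field F] [Finite F] {N d k : ℕ}
    (C : Set (Submodule F (Fin N → F))) (hdim : ∀ U ∈ C, Module.finrank F U = k)
    (hdist : ∀ U ∈ C, ∀ W ∈ C, U ≠ W → d ≤ sDist U W) :
    C.ncard ≤ Aq F N d k := by
  have : Finite (Submodule F (Fin N → F)) :=
    Finite.of_injective _ (SetLike.coe_injective (A := Submodule F (Fin N → F)))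
  refine le_csSup ⟨Nat.card (Submodule F (Fin N → F)), ?_⟩ ⟨C, C.toFinite, rfl, hdim, hdist⟩
  rintro _ ⟨C', -, rfl, -, -⟩
  exact Set.ncard_le_card C'

namespace LiftedCode

variable {F : Type*} [Field F] {k n : ℕ}

noncomputable def liftMatrix (A : Matrix (Fin k) (Fin n) F) : Matrix (Fin k) (Fin (k + n)) F :=
  (fromCols 1 A).submatrix id finSumFinEquiv.symm

theorem vecMul_liftMatrix (A : Matrix (Fin k) (Fin n) F) (x : Fin k → F) :
    x ᵥ* liftMatrix A = Fin.append x (x ᵥ* A) := by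
  ext j
  refine Fin.addCases (fun i => ?_) (fun i => ?_) j
  · simp [liftMatrix, vecMul, dotProduct, one_apply]
  · simp [liftMatrix, vecMul, dotProduct]

theorem liftL_eq_range (A : Matrix (Fin k) (Fin n) F) :
    liftL A = LinearMap.range (liftMatrix A).vecMulLinear := by
  rw [range_vecMulLinear]; rfl

theorem vecMul_liftMatrix_of_eq {A : Matrix (Fin k) (Fin n) F} {f : Fin (k + n) → F}
    (h : f ∘ Fin.natAdd k = (f ∘ Fin.castAdd n) ᵥ* A) : (f ∘ Fin.castAdd n) ᵥ* liftMatrix A = f := by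
  rw [vecMul_liftMatrix, ← h]
  exact Fin.append_castAdd_natAdd

theorem mem_liftL_iff {A : Matrix (Fin k) (Fin n) F} {f : Fin (k + n) → F} :
    f ∈ liftL A ↔ f ∘ Fin.natAdd k = (f ∘ Fin.castAdd n) ᵥ* A := by
  rw [liftL_eq_range]
  constructor
  · rintro ⟨x, rfl⟩
    simp [vecMul_liftMatrix, Function.comp_def]
  · intro h
    exact ⟨f ∘ Fin.castAdd n, vecMul_liftMatrix_of_eq h⟩

theorem vecMulLinear_liftMatrix_injective (A : Matrix (Fin k) (Fin n) F) :
    Function.Injective (liftMatrix A).vecMulLinear := by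
  intro x y h
  simpa [vecMul_liftMatrix, Function.comp_def] using
    congrArg (· ∘ Fin.castAdd n) (h : x ᵥ* liftMatrix A = y ᵥ* liftMatrix A)

theorem finrank_liftL (A : Matrix (Fin k) (Fin n) F) : Module.finrank F (liftL A) = k := by
  rw [liftL_eq_range, LinearMap.finrank_range_of_inj (vecMulLinear_liftMatrix_injective A),
    Module.finrank_fin_fun]

theorem liftL_injective : Function.Injective (liftL : Matrix (Fin k) (Fin n) F → _) := by
  intro A B h
  ext i j
  have hrow : Pi.single i 1 ᵥ* liftMatrix A ∈ liftL B := by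
    rw [← h, liftL_eq_range]
    exact LinearMap.mem_range_self _ _
  have := congrFun (mem_liftL_iff.mp hrow) j
  rw [vecMul_liftMatrix] at this
  simpa [Function.comp_def] using this

theorem liftL_inf_liftL (A B : Matrix (Fin k) (Fin n) F) :
    liftL A ⊓ liftL B = (LinearMap.ker (A - B).vecMulLinear).map (liftMatrix A).vecMulLinear := by
  ext f
  rw [Submodule.mem_inf, mem_liftL_iff, mem_liftL_iff, Submodule.mem_map]
  constructor
  · rintro ⟨hA, hB⟩
    refine ⟨f ∘ Fin.castAdd n, ?_, vecMul_liftMatrix_of_eq hA⟩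
    rw [LinearMap.mem_ker, vecMulLinear_apply, vecMul_sub, ← hA, ← hB, sub_self]
  · rintro ⟨x, hx, rfl⟩
    have hAB : x ᵥ* A = x ᵥ* B := by
      rwa [LinearMap.mem_ker, vecMulLinear_apply, vecMul_sub, sub_eq_zero] at hx
    simpa [vecMul_liftMatrix, Function.comp_def] using hAB

theorem sDist_liftL (A B : Matrix (Fin k) (Fin n) F) :
    sDist (liftL A) (liftL B) = 2 * (A - B).rank := by
  have hinf : Module.finrank F ↥(liftL A ⊓ liftL B) = k - (A - B).rank := by
    rw [liftL_inf_liftL, ← LinearEquiv.finrank_eq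
      (Submodule.equivMapOfInjective _ (vecMulLinear_liftMatrix_injective A) _),
      finrank_ker_vecMulLinear, Fintype.card_fin]
  have hrank : (A - B).rank ≤ k := rank_le_height _
  have hsum := Submodule.finrank_sup_add_finrank_inf_eq (liftL A) (liftL B)
  rw [finrank_liftL, finrank_liftL, hinf] at hsum
  rw [sDist, hinf]
  omega

end LiftedCode

open LiftedCode in
theorem stmt1_general (k n d : ℕ)
    (F : Type*) [Field F] [Fintype F]
    (Q : Finset (Matrix (Fin k) (Fin n) F))
    (hQ : ∀ A ∈ Q, ∀ B ∈ Q, A ≠ B → d ≤ (A - B).rank) :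
    Set.ncard ((fun A : Matrix (Fin k) (Fin n) F => liftL A) '' (Q : Set (Matrix (Fin k) (Fin n) F))) = Q.card ∧
    (∀ A ∈ Q, Module.finrank F ↥(liftL A) = k) ∧
    (∀ A ∈ Q, ∀ B ∈ Q, liftL A ≠ liftL B → 2 * d ≤ sDist (liftL A) (liftL B)) ∧
    Q.card ≤ Aq F (n + k) (2 * d) k := by
  have hcard : Set.ncard (liftL '' (Q : Set (Matrix (Fin k) (Fin n) F))) = Q.card := by
    rw [Set.ncard_image_of_injective _ liftL_injective, Set.ncard_coe_finset]
  have hdist : ∀ A ∈ Q, ∀ B ∈ Q, liftL A ≠ liftL B → 2 * d ≤ sDist (liftL A) (liftL B) := by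
    intro A hA B hB hne
    rw [sDist_liftL]
    exact Nat.mul_le_mul_left 2 (hQ A hA B hB (ne_of_apply_ne liftL hne))
  refine ⟨hcard, fun A _ => finrank_liftL A, hdist, ?_⟩
  rw [← hcard, Nat.add_comm n k]
  apply ncard_le_Aq
  · rintro _ ⟨A, -, rfl⟩
    exact finrank_liftL A
  · rintro _ ⟨A, hA, rfl⟩ _ ⟨B, hB, rfl⟩
    exact hdist A hA B hB

theorem stmt1 (q k n d : ℕ) (hq : IsPrimePow q) (hk : 1 ≤ k) (hn : 1 ≤ n) (hd : 1 ≤ d)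
    (F : Type*) [Field F] [Fintype F] (hF : Fintype.card F = q)
    (Q : Finset (Matrix (Fin k) (Fin n) F))
    (hQ : ∀ A ∈ Q, ∀ B ∈ Q, A ≠ B → d ≤ (A - B).rank) :
    Set.ncard ((fun A : Matrix (Fin k) (Fin n) F => liftL A) '' (Q : Set (Matrix (Fin k) (Fin n) F))) = Q.card ∧
    (∀ A ∈ Q, Module.finrank F ↥(liftL A) = k) ∧
    (∀ A ∈ Q, ∀ B ∈ Q, liftL A ≠ liftL B → 2 * d ≤ sDist (liftL A) (liftL B)) ∧
    Q.card ≤ Aq F (n + k) (2 * d) k :=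
  stmt1_general k n d F Q hQ
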